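/- arXiv:2206.04290 — 5 statements merged into one kernel-verified Lean document; each statement's English description precedes it below -/
import Mathlib

section
/- Let c be a nonzero integer with c ≡ 1 (mod 4) and let f(z) = z² + 1/c ∈ ℚ[z]. Then for every n ≥ 1 the n-th iterate fⁿ(z) is irreducible over ℚ. -/
/-!
The engine is a Capelli-type criterion: if `g` is monic irreducible of degree `d` over a field
`K` and `(-1)ᵈ g(a)` is not a square in `K`, then `g(x² + a)` is irreducible. Indeed, let `θ` be
a root of an irreducible factor `h` and `β = θ² + a`, a root of `g`. If `h` is a proper factor
then `[K(θ) : K] = d`, so `K(θ) = K(θ²)` and `(-1)ᵈ g(a)`, the norm of `θ² = β - a`, is the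
square of the norm of `θ`.

Since `fⁿ⁺¹ = fⁿ ∘ f`, it remains to see that `-1/c` and `fⁿ(1/c)` for `n ≥ 1` are not squares
in `ℚ`. For `c < 0` the orbit of `1/c` stays in `[1/c, 0)`. For `c > 0` write
`fᵏ(1/c) = sₖ / c^(2ᵏ)` with `s₀ = 1`, `sₖ₊₁ = sₖ² + c^(2ᵏ⁺¹ - 1)`. Modulo `8`, `sₖ ≡ 1 + c`
for odd `k` and `sₖ ≡ 4 + c` for even `k ≥ 2`, which settles everything except even `k` with
`c ≡ 5 (mod 8)`; there a Jacobi symbol argument applies, using `sₖ ≡ 1 (mod c)`.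
-/

open Polynomial IntermediateField Module ZMod
open scoped NumberTheorySymbols

theorem Algebra.norm_eq_pow_coeff_zero_minpoly {K L : Type*} [Field K] [Field L] [Algebra K L]
    [FiniteDimensional K L] (x : L) :
    Algebra.norm K x =
      ((-1) ^ (minpoly K x).natDegree * (minpoly K x).coeff 0) ^ finrank K⟮x⟯ L := by
  have hx : IsIntegral K x := .of_finite K x
  have h := PowerBasis.norm_gen_eq_coeff_zero_minpoly (IntermediateField.adjoin.powerBasis hx)
  rw [IntermediateField.adjoin.powerBasis_gen, minpoly_gen] at h
  rw [norm_eq_norm_adjoin, h]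
  rfl

theorem isSquare_neg_one_pow_mul_eval_of_finrank_eq {K L : Type*} [Field K] [Field L]
    [Algebra K L] [FiniteDimensional K L] {g : K[X]} {a : K} {θ : L}
    (hθ : minpoly K (θ ^ 2 + algebraMap K L a) = g) (hL : finrank K L = g.natDegree) :
    IsSquare ((-1) ^ g.natDegree * g.eval a) := by
  have hmin : minpoly K (θ ^ 2) = g.comp (X + C a) := by
    rw [← hθ, ← minpoly.sub_algebraMap, add_sub_cancel_right]
  have hdeg : (minpoly K (θ ^ 2)).natDegree = g.natDegree := by
    rw [hmin, natDegree_comp, natDegree_X_add_C, mul_one]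
  have hcoeff : (minpoly K (θ ^ 2)).coeff 0 = g.eval a := by
    rw [hmin, coeff_zero_eq_eval_zero, eval_comp, eval_add, eval_X, eval_C, zero_add]
  have hpos : 0 < g.natDegree := hdeg ▸ minpoly.natDegree_pos (.of_finite K _)
  have hrank : finrank K⟮θ ^ 2⟯ L = 1 := by
    have htower := finrank_mul_finrank K K⟮θ ^ 2⟯ L
    rw [adjoin.finrank (.of_finite K _), hdeg, hL] at htower
    exact Nat.eq_of_mul_eq_mul_left hpos (htower.trans (mul_one _).symm)
  refine ⟨Algebra.norm K θ, ?_⟩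
  rw [← hdeg, ← hcoeff, ← pow_one (_ * _), ← hrank, ← Algebra.norm_eq_pow_coeff_zero_minpoly,
    map_pow, sq]

theorem Polynomial.irreducible_comp_X_sq_add_C {K : Type*} [Field K] {g : K[X]} (hg : g.Monic)
    (hirr : Irreducible g) {a : K} (ha : ¬IsSquare ((-1) ^ g.natDegree * g.eval a)) :
    Irreducible (g.comp (X ^ 2 + C a)) := by
  have hf : (X ^ 2 + C a).natDegree = 2 := natDegree_X_pow_add_C
  have hmonic : (g.comp (X ^ 2 + C a)).Monic :=
    hg.comp (monic_X_pow_add_C a two_ne_zero) (by rw [hf]; exact two_ne_zero)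
  have hdeg : (g.comp (X ^ 2 + C a)).natDegree = g.natDegree * 2 := by rw [natDegree_comp, hf]
  obtain ⟨h, hhm, hhirr, hdvd⟩ := exists_monic_irreducible_factor (g.comp (X ^ 2 + C a))
    fun hu => hirr.natDegree_pos.ne' (by simpa [hdeg] using natDegree_eq_zero_of_isUnit hu)
  suffices g.natDegree * 2 ≤ h.natDegree by
    rwa [eq_of_monic_of_dvd_of_natDegree_le hhm hmonic hdvd (hdeg ▸ this)]
  have : Fact (Irreducible h) := ⟨hhirr⟩
  let θ := AdjoinRoot.root h
  have hβ : minpoly K (θ ^ 2 + algebraMap K _ a) = g := by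
    refine (minpoly.eq_of_irreducible_of_monic hirr ?_ hg).symm
    obtain ⟨k, hk⟩ := hdvd
    have := congrArg (aeval θ) hk
    simpa [aeval_comp, θ] using this
  have hL : finrank K (AdjoinRoot h) = h.natDegree := (AdjoinRoot.powerBasis hhirr.ne_zero).finrank
  have : FiniteDimensional K (AdjoinRoot h) := (AdjoinRoot.powerBasis hhirr.ne_zero).finite
  obtain ⟨r, hr⟩ : g.natDegree ∣ h.natDegree := by
    rw [← hL, ← hβ, ← adjoin.finrank (.of_finite K _)]
    exact ⟨_, (finrank_mul_finrank K _ (AdjoinRoot h)).symm⟩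
  have hr0 : r ≠ 0 := by
    rintro rfl
    exact hhirr.natDegree_pos.ne' (by rw [hr, mul_zero])
  have hr1 : r ≠ 1 := by
    rintro rfl
    exact ha (isSquare_neg_one_pow_mul_eval_of_finrank_eq hβ (by rw [hL, hr, mul_one]))
  rw [hr]
  exact Nat.mul_le_mul_left _ (by omega)

theorem Polynomial.iterate_comp_X_succ {R : Type*} [CommSemiring R] (p : R[X]) (n : ℕ) :
    (p.comp ·)^[n + 1] X = ((p.comp ·)^[n] X).comp p := by
  have hcomm : Function.Commute (p.comp ·) (·.comp p) := fun q => (comp_assoc p q p).symm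
  calc (p.comp ·)^[n + 1] X = (p.comp ·)^[n] (X.comp p) := by
        rw [Function.iterate_succ_apply, comp_X, X_comp]
    _ = _ := hcomm.iterate_left n X

theorem Polynomial.Monic.iterate_comp_X {R : Type*} [CommSemiring R] {p : R[X]} (hp : p.Monic)
    (hdeg : p.natDegree ≠ 0) (n : ℕ) : ((p.comp ·)^[n] X).Monic := by
  induction n with
  | zero => exact monic_X
  | succ n ih => rw [iterate_comp_X_succ]; exact ih.comp hp hdeg

theorem jacobiSym.pow_left_of_odd {a : ℤ} {b : ℕ} (h : a.gcd b = 1) {e : ℕ} (he : Odd e) :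
    J(a ^ e | b) = J(a | b) := by
  rw [jacobiSym.pow_left]
  rcases jacobiSym.eq_one_or_neg_one h with h | h <;> simp [h, he.neg_one_pow]

theorem jacobiSym.ne_χ₈'_of_mul_mod_eight_eq_five {D q : ℕ} (hD : Odd D) (hq : Odd q)
    (h : D * q % 8 = 5) (hqD : J(q | D) = χ₈ D) : J(D | q) ≠ χ₈' q := by
  intro hDq
  rw [Nat.odd_iff] at hD hq
  rw [← jacobiSym.quadratic_reciprocity_if hq hD, hDq, χ₈_nat_eq_if_mod_eight,
    χ₈'_nat_eq_if_mod_eight] at hqD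
  have h8 : D % 8 * (q % 8) % 8 = 5 := by rw [← Nat.mul_mod, h]
  have hD8 : D % 8 = 1 ∨ D % 8 = 3 ∨ D % 8 = 5 ∨ D % 8 = 7 := by omega
  rcases hD8 with hD8 | hD8 | hD8 | hD8 <;> rw [hD8] at h8 <;> split_ifs at hqD <;> omega

theorem Int.not_isSquare_of_cast_zmod {n : ℕ} {z : ℤ} {r : ZMod n} (hz : (z : ZMod n) = r)
    (hr : ¬IsSquare r) : ¬IsSquare z :=
  fun hsq => hr (hz ▸ hsq.map (Int.castRingHom (ZMod n)))

theorem Int.isCoprime_sub_add_of_mul_eq_pow {c S t : ℤ} (hc : Odd c) (hS : S ≡ 1 [ZMOD c])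
    {e : ℕ} (h : (t - S) * (t + S) = c ^ e) : IsCoprime (t - S) (t + S) := by
  obtain ⟨m, hm⟩ := hS.symm.dvd
  have hSc : IsCoprime S c := ⟨1, -m, by linear_combination hm⟩
  have h2S : IsCoprime ((t + S) + (-1) * (t - S)) ((t - S) * (t + S)) := by
    rw [h, show (t + S) + (-1) * (t - S) = 2 * S by ring]
    exact ((Int.isCoprime_two_left.mpr hc).mul_left hSc).pow_right
  exact h2S.of_mul_right_left.of_add_mul_right_left.symm

/- If `t² = S² + cᵉ` then `(t - S)(t + S) = cᵉ` with coprime factors, so `t - S = Dᵉ` and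
`t + S = qᵉ` with `Dq = c`. Then `qᵉ ≡ 2 (mod D)` and `Dᵉ ≡ -2 (mod q)`, which quadratic
reciprocity forbids when `Dq ≡ 5 (mod 8)`. -/
theorem Int.not_isSquare_sq_add_pow {c S : ℤ} (hc : 0 < c) (hc8 : c % 8 = 5)
    (hS : S ≡ 1 [ZMOD c]) {e : ℕ} (he : Odd e) : ¬IsSquare (S ^ 2 + c ^ e) := by
  rintro ⟨t₀, ht₀⟩
  set t := |t₀|
  have huv : (t - S) * (t + S) = c ^ e := by
    linear_combination (abs_mul_abs_self t₀).trans ht₀.symm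
  have hce : 0 < c ^ e := pow_pos hc e
  have hu : 0 < t - S := by nlinarith [abs_nonneg t₀]
  have hv : 0 < t + S := by nlinarith [abs_nonneg t₀]
  have hcop := Int.isCoprime_sub_add_of_mul_eq_pow (Int.odd_iff.mpr (by omega)) hS huv
  obtain ⟨⟨D, hD⟩, ⟨q, hq⟩⟩ := Int.eq_pow_of_mul_eq_pow_odd hcop he huv
  have hDq : D * q = c := he.strictMono_pow.injective (by rw [mul_pow, ← hD, ← hq, huv])
  have hDpos : 0 < D := he.pow_pos_iff.mp (hD ▸ hu)
  have hqpos : 0 < q := he.pow_pos_iff.mp (hq ▸ hv)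
  have hDq_cop : IsCoprime D q := IsCoprime.pow_iff he.pos he.pos |>.mp (hD ▸ hq ▸ hcop)
  have hqD2 : q ^ e ≡ 2 [ZMOD D] := calc
    q ^ e = D ^ e + 2 * S := by rw [← hD, ← hq]; ring
    _ ≡ 0 + 2 * 1 [ZMOD D] :=
      (Int.modEq_zero_iff_dvd.mpr (dvd_pow_self D he.pos.ne')).add
        ((hS.of_dvd ⟨q, hDq.symm⟩).mul_left 2)
  have hDq2 : D ^ e ≡ -2 [ZMOD q] := calc
    D ^ e = q ^ e - 2 * S := by rw [← hD, ← hq]; ring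
    _ ≡ 0 - 2 * 1 [ZMOD q] :=
      (Int.modEq_zero_iff_dvd.mpr (dvd_pow_self q he.pos.ne')).sub
        ((hS.of_dvd ⟨D, by rw [← hDq, mul_comm]⟩).mul_left 2)
  obtain ⟨hDodd, hqodd⟩ := Int.odd_mul.mp (hDq ▸ Int.odd_iff.mpr (by omega) : Odd (D * q))
  lift D to ℕ using hDpos.le
  lift q to ℕ using hqpos.le
  rw [Int.odd_coe_nat] at hDodd hqodd
  have hc' : ((D * q : ℕ) : ℤ) = c := by push_cast; exact hDq
  refine jacobiSym.ne_χ₈'_of_mul_mod_eight_eq_five hDodd hqodd (by omega) ?_ ?_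
  · rw [← jacobiSym.pow_left_of_odd (Int.isCoprime_iff_gcd_eq_one.mp hDq_cop.symm) he,
      jacobiSym.mod_left' hqD2, jacobiSym.at_two hDodd]
  · rw [← jacobiSym.pow_left_of_odd (Int.isCoprime_iff_gcd_eq_one.mp hDq_cop) he,
      jacobiSym.mod_left' hDq2, jacobiSym.at_neg_two hqodd]

theorem Nat.odd_two_pow_succ_sub_one (k : ℕ) : Odd (2 ^ (k + 1) - 1) :=
  Nat.Even.sub_odd Nat.one_le_two_pow ((Nat.even_pow.mpr ⟨even_two, k.succ_ne_zero⟩)) odd_one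

theorem iterate_sq_add_mem_Ico {α : Type*} [Field α] [LinearOrder α] [IsStrictOrderedRing α]
    {a : α} (ha : -1 < a) (ha0 : a < 0) (k : ℕ) : (fun x => x ^ 2 + a)^[k] a ∈ Set.Ico a 0 := by
  induction k with
  | zero => exact ⟨le_rfl, ha0⟩
  | succ k ih =>
    rw [Function.iterate_succ_apply']
    obtain ⟨h1, h2⟩ := ih
    exact ⟨by nlinarith, by nlinarith⟩

def orbitNum (c : ℤ) : ℕ → ℤ
  | 0 => 1
  | k + 1 => orbitNum c k ^ 2 + c ^ (2 ^ (k + 1) - 1)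

section

variable {c : ℤ}

theorem iterate_sq_add_one_div_eq_orbitNum (hc : c ≠ 0) (k : ℕ) :
    (fun x : ℚ => x ^ 2 + 1 / c)^[k] (1 / c) = orbitNum c k / (c : ℚ) ^ 2 ^ k := by
  induction k with
  | zero => simp [orbitNum]
  | succ k ih =>
    have hc' : (c : ℚ) ^ 2 ^ (k + 1) = c ^ (2 ^ (k + 1) - 1) * c := by
      rw [← pow_succ, Nat.sub_add_cancel Nat.one_le_two_pow]
    have hsq : ((c : ℚ) ^ 2 ^ k) ^ 2 = c ^ 2 ^ (k + 1) := by rw [← pow_mul, pow_succ]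
    rw [Function.iterate_succ_apply', ih, orbitNum, div_pow, hsq, hc']
    push_cast
    field_simp

theorem orbitNum_modEq_one (k : ℕ) : orbitNum c k ≡ 1 [ZMOD c] := by
  induction k with
  | zero => rfl
  | succ k ih =>
    have hc : c ^ (2 ^ (k + 1) - 1) ≡ 0 [ZMOD c] :=
      Int.modEq_zero_iff_dvd.mpr (dvd_pow_self c (Nat.odd_two_pow_succ_sub_one k).pos.ne')
    simpa [orbitNum] using (ih.pow 2).add hc

theorem orbitNum_cast_zmod_eight (hc : (c : ZMod 8) = 1 ∨ (c : ZMod 8) = 5) (j : ℕ) :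
    (orbitNum c (2 * j + 1) : ZMod 8) = 1 + c ∧ (orbitNum c (2 * j + 2) : ZMod 8) = 4 + c := by
  have hstep : ∀ k, (orbitNum c (k + 1) : ZMod 8) = (orbitNum c k : ZMod 8) ^ 2 + c := by
    intro k
    obtain ⟨m, hm⟩ := Nat.odd_two_pow_succ_sub_one k
    have hsq : (c : ZMod 8) ^ 2 = 1 := by rcases hc with h | h <;> rw [h] <;> decide
    rw [orbitNum, Int.cast_add, Int.cast_pow, Int.cast_pow, hm, pow_succ (c : ZMod 8), pow_mul,
      hsq, one_pow, one_mul]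
  have hodd : (orbitNum c (2 * j + 1) : ZMod 8) = 1 + c := by
    induction j with
    | zero => rw [hstep]; simp [orbitNum]
    | succ j ih =>
      rw [show 2 * (j + 1) + 1 = 2 * j + 1 + 1 + 1 by ring, hstep, hstep, ih]
      rcases hc with h | h <;> rw [h] <;> decide
  refine ⟨hodd, ?_⟩
  rw [hstep, hodd]
  rcases hc with h | h <;> rw [h] <;> decide

theorem not_isSquare_orbitNum (hc : 0 < c) (hc4 : c % 4 = 1) {k : ℕ} (hk : k ≠ 0) :
    ¬IsSquare (orbitNum c k) := by
  have hc8 : c % 8 = 1 ∨ c % 8 = 5 := by omega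
  have hγ : (c : ZMod 8) = 1 ∨ (c : ZMod 8) = 5 := by
    rw [← ZMod.intCast_mod]
    rcases hc8 with h | h <;> simp only [Nat.cast_ofNat, h] <;> decide
  obtain ⟨j, rfl | rfl⟩ : ∃ j, k = 2 * j + 1 ∨ k = 2 * j + 2 := ⟨(k - 1) / 2, by omega⟩
  · exact Int.not_isSquare_of_cast_zmod (orbitNum_cast_zmod_eight hγ j).1
      (by rcases hγ with h | h <;> rw [h] <;> decide)
  · rcases hc8 with h8 | h8
    · refine Int.not_isSquare_of_cast_zmod (orbitNum_cast_zmod_eight hγ j).2 ?_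
      rw [show (c : ZMod 8) = 1 by rw [← ZMod.intCast_mod]; simp only [Nat.cast_ofNat, h8]; rfl]
      decide
    · rw [orbitNum]
      exact Int.not_isSquare_sq_add_pow hc h8 (orbitNum_modEq_one _)
        (Nat.odd_two_pow_succ_sub_one _)

theorem one_div_mem_Ioo_of_neg_of_emod_four (hc : c < 0) (hc4 : c % 4 = 1) :
    (1 / c : ℚ) ∈ Set.Ioo (-1) 0 := by
  have : (c : ℚ) ≤ -3 := by exact_mod_cast (by omega : c ≤ -3)
  constructor
  · rw [lt_div_iff_of_neg (by linarith)]; linarith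
  · exact one_div_neg.mpr (by linarith)

theorem not_isSquare_neg_one_div (hc : c ≠ 0) (hc4 : c % 4 = 1) : ¬IsSquare (-(1 / c : ℚ)) := by
  rcases hc.lt_or_gt with hneg | hpos
  · rw [← one_div_neg_eq_neg_one_div, one_div, isSquare_inv, ← Int.cast_neg,
      Rat.isSquare_intCast_iff]
    refine Int.not_isSquare_of_cast_zmod (r := (3 : ZMod 4)) ?_ (by decide)
    rw [← ZMod.intCast_mod]
    simp only [Nat.cast_ofNat, show -c % 4 = 3 by omega]
    rfl
  · exact fun h => (neg_neg_of_pos (by positivity : (0 : ℚ) < 1 / c)).not_ge h.nonneg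

theorem not_isSquare_iterate_sq_add_one_div (hc : c ≠ 0) (hc4 : c % 4 = 1) {k : ℕ}
    (hk : k ≠ 0) :
    ¬IsSquare ((fun x : ℚ => x ^ 2 + 1 / c)^[k] (1 / c)) := by
  rcases hc.lt_or_gt with hneg | hpos
  · obtain ⟨h1, h0⟩ := one_div_mem_Ioo_of_neg_of_emod_four hneg hc4
    exact fun h => (iterate_sq_add_mem_Ico h1 h0 k).2.not_ge h.nonneg
  · rw [iterate_sq_add_one_div_eq_orbitNum hc]
    intro h
    apply not_isSquare_orbitNum hpos hc4 hk
    rw [← Rat.isSquare_intCast_iff]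
    have hsq : IsSquare ((c : ℚ) ^ 2 ^ k) := by
      obtain ⟨m, rfl⟩ := Nat.exists_eq_succ_of_ne_zero hk
      exact ⟨c ^ 2 ^ m, by rw [← pow_two, ← pow_mul, pow_succ]⟩
    simpa [div_mul_cancel₀, hpos.ne'] using h.mul hsq

end

/-- If `c ≡ 1 (mod 4)` is a nonzero integer and `f(z) = z² + 1/c ∈ ℚ[z]`,
then every iterate `fⁿ` (`n ≥ 1`) is irreducible over `ℚ`.
Here `fⁿ` is the `n`-fold composition of `f`, encoded as `(f.comp ·)^[n] X`. -/
theorem stmt0 (c : ℤ) (hc : c ≠ 0) (hmod : c % 4 = 1)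
    (f : ℚ[X]) (hf : f = X ^ 2 + C (1 / (c : ℚ))) :
    ∀ n : ℕ, 1 ≤ n → Irreducible ((f.comp ·)^[n] X) := by
  subst hf
  have hdeg : (X ^ 2 + C (1 / (c : ℚ))).natDegree = 2 := natDegree_X_pow_add_C
  rintro n -
  induction n with
  | zero => exact irreducible_X
  | succ n ih =>
    rw [iterate_comp_X_succ]
    refine irreducible_comp_X_sq_add_C
      ((monic_X_pow_add_C _ two_ne_zero).iterate_comp_X (by rw [hdeg]; exact two_ne_zero) n) ih ?_
    rw [natDegree_iterate_comp, hdeg, natDegree_X, mul_one, iterate_comp_eval, eval_X]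
    simp only [eval_add, eval_pow, eval_X, eval_C]
    rcases n with _ | n
    · simpa using not_isSquare_neg_one_div hc hmod
    · rw [(Nat.even_pow.mpr ⟨even_two, n.succ_ne_zero⟩).neg_one_pow, one_mul]
      exact not_isSquare_iterate_sq_add_one_div hc hmod n.succ_ne_zero
end

section
/- Let K be a number field, let c ∈ K be nonzero, let f(z) = z³ + 1/c ∈ K[z], and let g ∈ K[z] be monic and irreducible over K. If for every n ≥ 1 the element g(fⁿ(0)) is not a cube in K (that is, there is no y ∈ K with g(fⁿ(0)) = y³), then the composition g ∘ fⁿ is irreducible over K for every n ≥ 0. -/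
open Polynomial IntermediateField

set_option synthInstance.maxHeartbeats 2000000 in
set_option maxHeartbeats 2000000 in
lemma aux_cube (K : Type*) [Field K] [NumberField K] (h : K[X]) (hm : h.Monic)
    (hi : Irreducible h) (u : K) (hnc : ¬ ∃ y : K, h.eval u = y ^ 3) :
    Irreducible (h.comp (X ^ 3 + C u)) := by
  have hfm : (X ^ 3 + C u).Monic :=
    (monic_X_pow 3).add_of_left (degree_C_le.trans_lt (by rw [degree_X_pow]; norm_num))
  refine Polynomial.irreducible_comp hm hfm hi ?_
  intro E _ _ x hx
  have hint : IsIntegral K x := by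
    by_contra hni
    exact hm.ne_zero ((hx.symm.trans (minpoly.eq_zero hni)))
  haveI : FiniteDimensional K K⟮x⟯ := IntermediateField.adjoin.finiteDimensional hint
  set γ : K⟮x⟯ := AdjoinSimple.gen K x with hγ
  have hmin : minpoly K γ = h := (IntermediateField.minpoly_gen K x).trans hx
  have hmap : (X ^ 3 + C u).map (algebraMap K K⟮x⟯) - C γ
      = X ^ 3 - C (γ - algebraMap K K⟮x⟯ u) := by
    simp only [Polynomial.map_add, Polynomial.map_pow, map_X, map_C, map_sub]
    ring
  rw [hmap]
  set δ : K⟮x⟯ := γ - algebraMap K K⟮x⟯ u with hδ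
  apply X_pow_sub_C_irreducible_of_prime Nat.prime_three
  intro b hb
  have hδint : IsIntegral K δ := IsIntegral.of_finite K δ
  have hδmin : minpoly K δ = h.comp (X + C u) := by
    rw [hδ, minpoly.sub_algebraMap, hmin]
  set m := h.natDegree with hmdef
  have hdeg : m ≠ 0 := hi.natDegree_pos.ne'
  have hδdeg : (minpoly K δ).natDegree = m := by
    rw [hδmin, natDegree_comp, natDegree_X_add_C, mul_one]
  have hrank : Module.finrank K K⟮x⟯ = m := by
    rw [IntermediateField.adjoin.finrank hint, hx]
  have hδrank : Module.finrank K ↥K⟮δ⟯ = m := by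
    rw [IntermediateField.adjoin.finrank hδint, hδdeg]
  have hd1 : Module.finrank ↥K⟮δ⟯ ↥K⟮x⟯ = 1 := by
    have hmul := Module.finrank_mul_finrank K ↥K⟮δ⟯ ↥K⟮x⟯
    rw [hδrank, hrank] at hmul
    exact Nat.eq_of_mul_eq_mul_left (Nat.pos_of_ne_zero hdeg) (by simpa using hmul)
  haveI : Algebra.IsSeparable K K⟮x⟯ := Algebra.IsSeparable.of_integral _ _
  have hnorm : Algebra.norm K δ = (-1) ^ m * h.eval u := by
    rw [Algebra.norm_eq_norm_adjoin K δ, hd1, pow_one,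
      ← IntermediateField.adjoin.powerBasis_gen hδint,
      Algebra.PowerBasis.norm_gen_eq_coeff_zero_minpoly,
      IntermediateField.adjoin.powerBasis_gen, IntermediateField.minpoly_gen,
      IntermediateField.adjoin.powerBasis_dim, hδdeg, hδmin, coeff_zero_eq_eval_zero]
    simp [eval_comp]
  have hNb : (Algebra.norm K b) ^ 3 = (-1) ^ m * h.eval u := by
    rw [← hnorm, ← map_pow, hb]
  refine hnc ⟨(-1) ^ m * Algebra.norm K b, ?_⟩
  have hsq : ((-1 : K) ^ m) * ((-1 : K) ^ m) = 1 := by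
    rw [← pow_add]; exact Even.neg_one_pow ⟨m, rfl⟩
  have hcube1 : (((-1 : K) ^ m) ^ 3) = (-1) ^ m := by
    rw [pow_succ, pow_two, hsq, one_mul]
  rw [mul_pow, hcube1, hNb, ← mul_assoc, hsq, one_mul]

open Polynomial

/-- Let `K` be a number field, `c ∈ K` nonzero, `f(z) = z³ + 1/c ∈ K[z]`, and let
`g ∈ K[z]` be monic and irreducible. If for every `n ≥ 1` the value `g(fⁿ(0))` is not
a cube in `K`, then `g ∘ fⁿ` is irreducible over `K` for every `n ≥ 0`. -/
theorem stmt8 (K : Type*) [Field K] [NumberField K] (c : K) (hc : c ≠ 0)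
    (f : K[X]) (hf : f = X ^ 3 + C (1 / c))
    (g : K[X]) (hgm : g.Monic) (hgi : Irreducible g)
    (hcube : ∀ n : ℕ, 1 ≤ n → ¬ ∃ y : K, g.eval (((f.comp ·)^[n] X).eval 0) = y ^ 3) :
    ∀ n : ℕ, Irreducible (g.comp ((f.comp ·)^[n] X)) := by
  set F : ℕ → K[X] := fun n => (f.comp ·)^[n] X with hF
  have hFsucc : ∀ n, F (n + 1) = f.comp (F n) := fun n =>
    Function.iterate_succ_apply' (f.comp ·) n X
  have hFsucc' : ∀ n, F (n + 1) = (F n).comp f := by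
    intro n
    induction n with
    | zero => simp [hFsucc 0, hF]
    | succ n ih => rw [hFsucc (n + 1), ih, ← comp_assoc, ← hFsucc n, ih]
  have hfm : f.Monic := by
    rw [hf]
    exact (monic_X_pow 3).add_of_left (degree_C_le.trans_lt (by rw [degree_X_pow]; norm_num))
  have hfd : f.natDegree = 3 := by
    rw [hf]; exact natDegree_X_pow_add_C
  have hFm : ∀ n, (F n).Monic ∧ (F n).natDegree = 3 ^ n := by
    intro n
    induction n with
    | zero => exact ⟨monic_X, natDegree_X⟩
    | succ n ih =>
      refine ⟨?_, ?_⟩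
      · rw [hFsucc']
        exact ih.1.comp hfm (by rw [hfd]; norm_num)
      · rw [hFsucc', natDegree_comp, ih.2, hfd, pow_succ]
  have hf0 : f.eval 0 = 1 / c := by rw [hf]; simp
  intro n
  induction n with
  | zero => simpa [hF] using hgi
  | succ n ih =>
    have hhm : (g.comp (F n)).Monic := hgm.comp (hFm n).1 (by rw [(hFm n).2]; positivity)
    have hkey : g.comp (F (n + 1)) = (g.comp (F n)).comp (X ^ 3 + C (1 / c)) := by
      rw [hFsucc' n, ← comp_assoc, hf]
    rw [hkey]
    refine aux_cube K (g.comp (F n)) hhm ih (1 / c) ?_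
    have heval : (g.comp (F n)).eval (1 / c) = g.eval ((F (n + 1)).eval 0) := by
      rw [hFsucc' n, eval_comp, eval_comp, hf0]
    rw [heval]
    exact hcube (n + 1) (by norm_num)
end

section
/- For every nonzero integer m, the polynomial z³ + (m² + 1)/m³ ∈ ℚ[z] is irreducible over ℚ. -/
open Polynomial

local notation "ℤi" => GaussianInt

private lemma cube_comp (a b : ℤ) :
    (⟨a, b⟩ : ℤi) ^ 3 = ⟨a ^ 3 - 3 * a * b ^ 2, 3 * a ^ 2 * b - b ^ 3⟩ := by
  rw [pow_succ, pow_succ, pow_one]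
  ext <;> simp [Zsqrtd.re_mul, Zsqrtd.im_mul] <;> ring

private lemma unit_cube (u : ℤi) (hu : IsUnit u) : ∃ w : ℤi, w ^ 3 = u := by
  have hn : u.norm.natAbs = 1 := Zsqrtd.norm_eq_one_iff.mpr hu
  obtain ⟨a, b⟩ := u
  have hval : Zsqrtd.norm (⟨a, b⟩ : ℤi) = a * a + b * b := by
    simp [Zsqrtd.norm]
  have hnorm : a * a + b * b = 1 := by
    have h0 : (0:ℤ) ≤ a * a := mul_self_nonneg a
    have h0' : (0:ℤ) ≤ b * b := mul_self_nonneg b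
    rw [hval] at hn
    omega
  have ha1 : -1 ≤ a := by nlinarith
  have ha2 : a ≤ 1 := by nlinarith
  have hb1 : -1 ≤ b := by nlinarith
  have hb2 : b ≤ 1 := by nlinarith
  interval_cases a <;> interval_cases b <;>
    first
      | (norm_num at hnorm; done)
      | (refine ⟨⟨-1, 0⟩, ?_⟩; ext <;> simp [pow_succ, Zsqrtd.re_mul, Zsqrtd.im_mul]; done)
      | (refine ⟨⟨0, 1⟩, ?_⟩; ext <;> simp [pow_succ, Zsqrtd.re_mul, Zsqrtd.im_mul]; done)
      | (refine ⟨⟨0, -1⟩, ?_⟩; ext <;> simp [pow_succ, Zsqrtd.re_mul, Zsqrtd.im_mul]; done)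
      | (refine ⟨⟨1, 0⟩, ?_⟩; ext <;> simp [pow_succ, Zsqrtd.re_mul, Zsqrtd.im_mul]; done)

/-- The Mordell equation `m² + 1 = t³` has no solutions with `m ≠ 0`. -/
private lemma mordell (m t : ℤ) (h : m ^ 2 + 1 = t ^ 3) : m = 0 := by
  by_contra hm
  -- m is even
  have hmeven : (2 : ℤ) ∣ m := by
    have h4 : ((m : ZMod 4)) ^ 2 + 1 = ((t : ZMod 4)) ^ 3 := by
      have := congrArg (Int.cast : ℤ → ZMod 4) h
      push_cast at this
      exact this
    have key : ∀ a b : ZMod 4, a ^ 2 + 1 = b ^ 3 → a ^ 2 = 0 := by decide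
    have hsq : ((m : ZMod 4)) ^ 2 = 0 := key _ _ h4
    have : ((m ^ 2 : ℤ) : ZMod 4) = 0 := by push_cast; exact hsq
    have h4d : (4 : ℤ) ∣ m ^ 2 := by
      rwa [ZMod.intCast_zmod_eq_zero_iff_dvd] at this
    have : (2 : ℤ) ∣ m ^ 2 := dvd_trans (by norm_num) h4d
    exact Int.Prime.dvd_pow' (by norm_num) this
  -- coprimality data in ℤ
  have hodd : ¬ (2 : ℤ) ∣ (m ^ 2 + 1) := by
    obtain ⟨k, rfl⟩ := hmeven
    intro hdvd
    have h2 : (2:ℤ) ∣ 1 := (dvd_add_right ⟨2 * k ^ 2, by ring⟩).mp hdvd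
    norm_num at h2
  have hcop : IsCoprime (4 : ℤ) (m ^ 2 + 1) := by
    have h2 : IsCoprime (2 : ℤ) (m ^ 2 + 1) :=
      (Int.prime_two.coprime_iff_not_dvd).mpr hodd
    have : IsCoprime ((2:ℤ) ^ 2) (m ^ 2 + 1) := IsCoprime.pow_left h2
    simpa using this
  obtain ⟨u, v, hbez⟩ := hcop
  -- move to Gaussian integers
  set i : ℤi := ⟨0, 1⟩ with hidef
  have hi : i ^ 2 = -1 := by
    ext <;> simp [hidef, pow_two, Zsqrtd.re_mul, Zsqrtd.im_mul]
  set α : ℤi := (m : ℤi) + i with hα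
  set β : ℤi := (m : ℤi) - i with hβ
  have hbezC : (u : ℤi) * 4 + (v : ℤi) * ((m:ℤi) ^ 2 + 1) = 1 := by
    have := congrArg (Int.cast : ℤ → ℤi) hbez
    push_cast at this
    exact this
  have hcopG : IsCoprime α β := by
    refine ⟨(v : ℤi) * β - 2 * i * (u : ℤi), 2 * i * (u : ℤi), ?_⟩
    rw [hα, hβ]
    linear_combination hbezC - ((v:ℤi) + 4 * (u:ℤi)) * hi
  have hmul : α * β = (t : ℤi) ^ 3 := by
    have hC : ((m:ℤi) ^ 2 + 1) = (t : ℤi) ^ 3 := by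
      have := congrArg (Int.cast : ℤ → ℤi) h
      push_cast at this
      exact this
    rw [hα, hβ]
    linear_combination hC - hi
  obtain ⟨d, hd⟩ := exists_associated_pow_of_mul_eq_pow' hcopG hmul
  obtain ⟨w, hw⟩ := hd
  obtain ⟨w3, hw3⟩ := unit_cube (w : ℤi) w.isUnit
  have hαc : α = ⟨m, 1⟩ := by
    rw [hα, hidef]; ext <;> simp
  set e : ℤi := d * w3 with hedef
  have he : e ^ 3 = (⟨m, 1⟩ : ℤi) := by
    rw [hedef, mul_pow, hw3, hw, hαc]
  clear_value e
  obtain ⟨a, b⟩ := e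
  rw [cube_comp] at he
  have hre : a ^ 3 - 3 * a * b ^ 2 = m := congrArg Zsqrtd.re he
  have him : 3 * a ^ 2 * b - b ^ 3 = 1 := congrArg Zsqrtd.im he
  have hbdvd : b ∣ 1 := ⟨3 * a ^ 2 - b ^ 2, by linear_combination -him⟩
  have hsq : (0:ℤ) ≤ a ^ 2 := sq_nonneg a
  rcases Int.isUnit_iff.mp (isUnit_of_dvd_one hbdvd) with hb | hb
  · subst hb
    have h32 : 3 * a ^ 2 = 2 := by linarith
    omega
  · subst hb
    have ha0 : a ^ 2 = 0 := by nlinarith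
    have : a = 0 := pow_eq_zero_iff (by norm_num) |>.mp ha0
    subst this
    simp at hre
    exact hm hre.symm

/-- For every nonzero integer `m`, the polynomial `z³ + (m² + 1)/m³ ∈ ℚ[z]` is
irreducible over `ℚ`. -/
theorem stmt13 (m : ℤ) (hm : m ≠ 0) :
    Irreducible ((X : ℚ[X]) ^ 3 + C (((m : ℚ) ^ 2 + 1) / (m : ℚ) ^ 3)) := by
  set c : ℚ := ((m : ℚ) ^ 2 + 1) / (m : ℚ) ^ 3 with hc
  have hmonic : (X ^ 3 + C c : ℚ[X]).Monic := monic_X_pow_add_C c (by norm_num)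
  have hdeg : (X ^ 3 + C c : ℚ[X]).natDegree = 3 := by
    rw [natDegree_X_pow_add_C]
  rw [hmonic.irreducible_iff_roots_eq_zero_of_degree_le_three (by omega) (by omega)]
  rw [Multiset.eq_zero_iff_forall_notMem]
  intro r hr
  have hne : (X ^ 3 + C c : ℚ[X]) ≠ 0 := hmonic.ne_zero
  have hroot : r ^ 3 + c = 0 := by
    have := (mem_roots hne).mp hr
    simpa [IsRoot] using this
  have hm0 : (m : ℚ) ≠ 0 := Int.cast_ne_zero.mpr hm
  set s : ℚ := (m : ℚ) * r with hs
  have hs3 : s ^ 3 = -((m : ℚ) ^ 2 + 1) := by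
    rw [hs, mul_pow]
    have hr3 : r ^ 3 = -c := by linarith
    rw [hr3, hc]
    field_simp
  have hden : s.den = 1 := by
    have h1 : (s ^ 3).den = 1 := by
      rw [hs3]
      have : -((m : ℚ) ^ 2 + 1) = ((-(m ^ 2 + 1) : ℤ) : ℚ) := by push_cast; ring
      rw [this, Rat.den_intCast]
    rw [Rat.den_pow] at h1
    exact Nat.dvd_one.mp ⟨s.den ^ 2, by rw [← h1]; ring⟩
  have hsnum : (s.num : ℚ) = s := (Rat.den_eq_one_iff s).mp hden
  have hcast : ((s.num : ℚ)) ^ 3 = -((m : ℚ) ^ 2 + 1) := by rw [hsnum]; exact hs3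
  have hkey : s.num ^ 3 = -(m ^ 2 + 1) := by exact_mod_cast hcast
  have ht : m ^ 2 + 1 = (-s.num) ^ 3 := by linear_combination hkey
  exact hm (mordell m (-s.num) ht)
end

section
/- Let m be a nonzero integer, f(z) = z³ + 1/m³ ∈ ℚ[z] and g₁(z) = z + 1/m. For every n ≥ 1, the numerator in lowest terms of the rational number g₁(f^{2n−1}(0)) is not the cube of an integer. -/
open Polynomial

/-!
Write `fʲ(0) = Aⱼ / m^(3ʲ)` with `A₀ = 0` and `Aⱼ₊₁ = Aⱼ³ + m^(3ʲ⁺¹ - 3)`. Then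
`g₁(f^J(0)) = N / m^(3^J)` with `N = A_J + m^(3^J - 1) ≡ 1 (mod m)`, so `N` is the numerator up
to sign. Modulo `c = m² + 1` we have `m² ≡ -1`, which forces `A₂ᵢ ≡ 0 (mod c)`. Hence for
`J = 2i + 1` we get `N = A₂ᵢ³ + c · m^(3^J - 3) = c · u` with `u ≡ m^(3^J - 3)` coprime to `c`.
If `N` were a cube, so would be `m² + 1`, and by Euler's theorem on `x² + 1 = y³` (proved by
factoring `(m + i)(m - i)` in `ℤ[i]`) this forces `m = 0`.
-/

theorem Int.even_of_sq_add_one_eq_pow_three {m k : ℤ} (h : m ^ 2 + 1 = k ^ 3) : Even m := by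
  have key : ∀ x y : ZMod 4, x ^ 2 + 1 = y ^ 3 → 2 * x = 0 := by decide
  have h4 : ((4 : ℕ) : ℤ) ∣ 2 * m := (ZMod.intCast_zmod_eq_zero_iff_dvd _ 4).mp <| by
    push_cast
    exact key m k (by exact_mod_cast congrArg (Int.cast : ℤ → ZMod 4) h)
  exact ⟨m / 2, by omega⟩

theorem GaussianInt.pow_four_eq_one_of_isUnit {u : GaussianInt} (hu : IsUnit u) : u ^ 4 = 1 := by
  have hn := (Zsqrtd.norm_eq_one_iff' (by norm_num) u).mpr hu
  obtain ⟨a, b⟩ := u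
  replace hn : a * a + b * b = 1 := by simp only [Zsqrtd.norm_def] at hn; linarith
  have small : ∀ x y : ℤ, x * x + y * y = 1 → x = -1 ∨ x = 0 ∨ x = 1 := fun x y hxy => by
    have : -1 ≤ x ∧ x ≤ 1 := ⟨by nlinarith, by nlinarith⟩
    omega
  have ha := small a b hn
  have hb := small b a (by linarith)
  rcases ha with rfl | rfl | rfl <;> rcases hb with rfl | rfl | rfl <;>
    first | decide | norm_num at hn

theorem GaussianInt.re_pow_three_eq_zero_of_im_eq_one {e : GaussianInt} (h : (e ^ 3).im = 1) :
    (e ^ 3).re = 0 := by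
  obtain ⟨a, b⟩ := e
  simp only [pow_succ, pow_zero, one_mul, Zsqrtd.re_mul, Zsqrtd.im_mul] at h ⊢
  have hb : b * (3 * a ^ 2 - b ^ 2) = 1 := by linear_combination h
  rcases Int.eq_one_or_neg_one_of_mul_eq_one hb with rfl | rfl
  · have : 3 * (a * a) = 2 := by linear_combination hb
    omega
  · obtain rfl : a = 0 := by nlinarith
    ring

theorem Int.eq_zero_of_sq_add_one_eq_pow_three {m k : ℤ} (h : m ^ 2 + 1 = k ^ 3) : m = 0 := by
  obtain ⟨w, rfl⟩ := Int.even_of_sq_add_one_eq_pow_three h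
  set s : GaussianInt := Zsqrtd.sqrtd
  have hs : s * s = -1 := by simp [s, Zsqrtd.dmuld]
  -- Bézout from `(m + i)(m - i) + w² (2i)² = m² + 1 - 4w² = 1`, where `m = 2w`.
  have hcop : IsCoprime ((w + w : ℤ) + s : GaussianInt) ((w + w : ℤ) - s) :=
    ⟨w ^ 2 * ((w + w : ℤ) + s) + (1 - 2 * w ^ 2) * ((w + w : ℤ) - s), w ^ 2 * ((w + w : ℤ) - s),
      by push_cast; linear_combination (4 * (w : GaussianInt) ^ 2 - 1) * hs⟩
  have hprod : ((w + w : ℤ) + s : GaussianInt) * ((w + w : ℤ) - s) = (k : GaussianInt) ^ 3 := by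
    have := congrArg (Int.cast : ℤ → GaussianInt) h
    push_cast at this ⊢
    linear_combination this - hs
  obtain ⟨d, u, hu⟩ := exists_associated_pow_of_mul_eq_pow' hcop hprod
  have hcube : (d * (u : GaussianInt) ^ 3) ^ 3 = (w + w : ℤ) + s := by
    have hu9 : (u : GaussianInt) ^ (3 * 3) = u := by
      rw [show 3 * 3 = 4 * 2 + 1 from rfl, pow_succ, pow_mul,
        GaussianInt.pow_four_eq_one_of_isUnit u.isUnit, one_pow, one_mul]
    rw [← hu, mul_pow, ← pow_mul, hu9]
  have hre := GaussianInt.re_pow_three_eq_zero_of_im_eq_one (e := d * (u : GaussianInt) ^ 3)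
    (by rw [hcube]; simp [s])
  rw [hcube] at hre
  simpa [s] using hre

def orbitNumerator {R : Type*} [CommSemiring R] (x : R) : ℕ → R
  | 0 => 0
  | j + 1 => orbitNumerator x j ^ 3 + x ^ (3 ^ (j + 1) - 3)

theorem pow_three_pow_succ_sub_three_mul {M : Type*} [Monoid M] (x : M) (j : ℕ) :
    x ^ (3 ^ (j + 1) - 3) * x ^ 3 = x ^ 3 ^ (j + 1) :=
  pow_sub_mul_pow x (by simpa using Nat.le_self_pow (Nat.succ_ne_zero j) 3)

section CommSemiring

variable {R S : Type*} [CommSemiring R] [CommSemiring S]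

theorem map_orbitNumerator (φ : R →+* S) (x : R) (j : ℕ) :
    φ (orbitNumerator x j) = orbitNumerator (φ x) j := by
  induction j with
  | zero => simp [orbitNumerator]
  | succ j ih => simp [orbitNumerator, ih]

theorem orbitNumerator_succ_add_pow (x : R) (j : ℕ) :
    orbitNumerator x (j + 1) + x ^ (3 ^ (j + 1) - 1) =
      orbitNumerator x j ^ 3 + (x ^ 2 + 1) * x ^ (3 ^ (j + 1) - 3) := by
  have h : 3 ^ (j + 1) - 1 = 3 ^ (j + 1) - 3 + 2 := by
    have := Nat.le_self_pow (Nat.succ_ne_zero j) 3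
    omega
  rw [orbitNumerator, h, pow_add]
  ring

end CommSemiring

section CommRing

variable {R : Type*} [CommRing R]

theorem isCoprime_orbitNumerator_succ (x : R) (j : ℕ) :
    IsCoprime (orbitNumerator x (j + 1)) x := by
  induction j with
  | zero => simp [orbitNumerator, isCoprime_one_left]
  | succ j ih =>
    obtain ⟨y, hy⟩ : x ∣ x ^ (3 ^ (j + 2) - 3) := dvd_pow_self x (by
      have := Nat.pow_le_pow_right (show 0 < 3 by norm_num) (show 2 ≤ j + 2 by omega)
      omega)
    rw [orbitNumerator, hy]
    exact ih.pow_left.add_mul_left_left y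

theorem isCoprime_orbitNumerator_succ_add_pow (x : R) (j : ℕ) :
    IsCoprime (orbitNumerator x (j + 1) + x ^ (3 ^ (j + 1) - 1)) x := by
  obtain ⟨y, hy⟩ : x ∣ x ^ (3 ^ (j + 1) - 1) := dvd_pow_self x (by
    have := Nat.one_lt_pow (Nat.succ_ne_zero j) (show 1 < 3 by norm_num)
    omega)
  rw [hy]
  exact (isCoprime_orbitNumerator_succ x j).add_mul_left_left y

theorem pow_three_pow_two_mul_of_sq_eq_neg_one {x : R} (hx : x ^ 2 = -1) (i : ℕ) :
    x ^ 3 ^ (2 * i) = x := by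
  induction i with
  | zero => simp
  | succ i ih =>
    rw [mul_add, pow_add, pow_mul, ih]
    linear_combination x * (x ^ 2 - 1) * (x ^ 4 + 1) * hx

theorem orbitNumerator_two_mul_of_sq_eq_neg_one {x : R} (hx : x ^ 2 = -1) (i : ℕ) :
    orbitNumerator x (2 * i) = 0 := by
  have cancel : ∀ y z : R, y * x ^ 3 = z → y = z * x := fun y z h => by
    linear_combination x * h - y * (x ^ 2 - 1) * hx
  induction i with
  | zero => rfl
  | succ i ih =>
    have hodd : x ^ (3 ^ (2 * i + 1) - 3) = 1 := by
      have h3 : x ^ 3 ^ (2 * i + 1) = x ^ 3 := by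
        rw [pow_succ, pow_mul, pow_three_pow_two_mul_of_sq_eq_neg_one hx]
      have := pow_three_pow_succ_sub_three_mul x (2 * i)
      rw [h3] at this
      linear_combination cancel _ _ this + x ^ 2 * hx - hx
    have heven : x ^ (3 ^ (2 * i + 1 + 1) - 3) = -1 := by
      have := pow_three_pow_succ_sub_three_mul x (2 * i + 1)
      rw [show 2 * i + 1 + 1 = 2 * (i + 1) by ring, pow_three_pow_two_mul_of_sq_eq_neg_one hx] at this
      linear_combination cancel _ _ this + hx
    rw [show 2 * (i + 1) = 2 * i + 1 + 1 by ring, orbitNumerator, orbitNumerator, ih, hodd, heven]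
    ring

end CommRing

theorem Int.sq_add_one_dvd_orbitNumerator_two_mul (m : ℤ) (i : ℕ) :
    m ^ 2 + 1 ∣ orbitNumerator m (2 * i) := by
  let π := Ideal.Quotient.mk (Ideal.span {m ^ 2 + 1})
  have hπ : π m ^ 2 = -1 := by
    have : π (m ^ 2 + 1) = 0 := Ideal.Quotient.eq_zero_iff_dvd _ _ |>.mpr dvd_rfl
    rw [map_add, map_pow, map_one] at this
    linear_combination this
  rw [← Ideal.Quotient.eq_zero_iff_dvd, map_orbitNumerator]
  exact orbitNumerator_two_mul_of_sq_eq_neg_one hπ i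

section Field

variable {K : Type*} [Field K] {x : K}

theorem iterate_eval_zero_eq_orbitNumerator_div (hx : x ≠ 0) (j : ℕ) :
    (fun z => z ^ 3 + 1 / x ^ 3)^[j] 0 = orbitNumerator x j / x ^ 3 ^ j := by
  induction j with
  | zero => simp [orbitNumerator]
  | succ j ih =>
    rw [Function.iterate_succ_apply', ih, orbitNumerator, div_pow, ← pow_mul, ← pow_succ,
      ← pow_three_pow_succ_sub_three_mul x j]
    field_simp

theorem orbitNumerator_div_add_inv (hx : x ≠ 0) (j : ℕ) :
    orbitNumerator x j / x ^ 3 ^ j + 1 / x =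
      (orbitNumerator x j + x ^ (3 ^ j - 1)) / x ^ 3 ^ j := by
  rw [← pow_sub_mul_pow x (Nat.one_le_pow j 3 (by norm_num)), pow_one]
  field_simp

end Field

theorem Rat.num_intCast_div_of_isCoprime {a b : ℤ} (h : IsCoprime a b) :
    ((a : ℚ) / b).num = b.sign * a := by
  rw [← Rat.divInt_eq_div, Rat.num_divInt, Int.isCoprime_iff_gcd_eq_one.mp h.symm, Nat.cast_one,
    Int.ediv_one]

/-- Let `m` be a nonzero integer, `f(z) = z³ + 1/m³ ∈ ℚ[z]` and `g₁(z) = z + 1/m`.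
For every `n ≥ 1`, the numerator (in lowest terms) of `g₁(f^{2n-1}(0))` is not the
cube of an integer. -/
theorem stmt15 (m : ℤ) (hm : m ≠ 0)
    (f : ℚ[X]) (hf : f = X ^ 3 + C (1 / (m : ℚ) ^ 3))
    (g₁ : ℚ[X]) (hg₁ : g₁ = X + C (1 / (m : ℚ))) :
    ∀ n : ℕ, 1 ≤ n →
      ¬ ∃ k : ℤ, (g₁.eval (((f.comp ·)^[2 * n - 1] X).eval 0)).num = k ^ 3 := by
  rintro n hn ⟨k, hk⟩
  obtain ⟨i, rfl⟩ : ∃ i, n = i + 1 := ⟨n - 1, by omega⟩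
  rw [show 2 * (i + 1) - 1 = 2 * i + 1 by omega, hf, hg₁, iterate_comp_eval] at hk
  simp only [eval_add, eval_pow, eval_X, eval_C] at hk
  have hmq : (m : ℚ) ≠ 0 := Int.cast_ne_zero.mpr hm
  have hcast : ((orbitNumerator m (2 * i + 1) : ℤ) : ℚ) = orbitNumerator (m : ℚ) (2 * i + 1) :=
    map_orbitNumerator (Int.castRingHom ℚ) m _
  have hval : orbitNumerator (m : ℚ) (2 * i + 1) / (m : ℚ) ^ 3 ^ (2 * i + 1) + 1 / (m : ℚ) =
      ((orbitNumerator m (2 * i + 1) + m ^ (3 ^ (2 * i + 1) - 1) : ℤ) : ℚ) /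
        ((m ^ 3 ^ (2 * i + 1) : ℤ) : ℚ) := by
    rw [orbitNumerator_div_add_inv hmq, ← hcast]
    norm_cast
  rw [iterate_eval_zero_eq_orbitNumerator_div hmq, hval,
    Rat.num_intCast_div_of_isCoprime (isCoprime_orbitNumerator_succ_add_pow m _).pow_right,
    orbitNumerator_succ_add_pow] at hk
  obtain ⟨t, ht⟩ := Int.sq_add_one_dvd_orbitNumerator_two_mul m i
  have hsign : IsUnit (m ^ 3 ^ (2 * i + 1)).sign := by
    rw [Int.isUnit_iff_natAbs_eq, Int.natAbs_sign_of_ne_zero (pow_ne_zero _ hm)]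
  have hcop : IsCoprime (m ^ 2 + 1) ((m ^ 3 ^ (2 * i + 1)).sign *
      (m ^ (3 ^ (2 * i + 1) - 3) + (m ^ 2 + 1) * ((m ^ 2 + 1) * t ^ 3))) := by
    rw [isCoprime_mul_unit_left_right hsign]
    exact (IsCoprime.pow_right ⟨1, -m, by ring⟩).add_mul_left_right _
  obtain ⟨d, hd⟩ := Int.eq_pow_of_mul_eq_pow_odd_left (k := 3) hcop (by decide)
    (by rw [← hk, ht]; ring)
  exact hm (Int.eq_zero_of_sq_add_one_eq_pow_three hd)
end

section
/- Let d ≥ 2 be an integer and c a nonzero integer, and let f(z) = z^d + 1/c ∈ ℚ[z]. Define integers aₙ by a₁ = 1 and aₙ = a_{n−1}^d + c^{d^{n−1}−1} for n ≥ 2. Then for every n ≥ 1: fⁿ(0) = aₙ / c^{d^{n−1}}, and the three integers aₙ, a_{n+1}, c are pairwise coprime. -/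
open Polynomial

/-- Let `d ≥ 2`, `c` a nonzero integer, `f(z) = z^d + 1/c ∈ ℚ[z]`, and define
`a₁ = 1`, `aₙ = a_{n-1}^d + c^{d^{n-1}-1}` for `n ≥ 2`. Then for all `n ≥ 1`,
`fⁿ(0) = aₙ / c^{d^{n-1}}` and the integers `aₙ`, `a_{n+1}`, `c` are pairwise
coprime. -/
theorem stmt17 (d : ℕ) (hd : 2 ≤ d) (c : ℤ) (hc : c ≠ 0)
    (f : ℚ[X]) (hf : f = X ^ d + C (1 / (c : ℚ)))
    (a : ℕ → ℤ) (ha1 : a 1 = 1)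
    (ha : ∀ n : ℕ, 2 ≤ n → a n = a (n - 1) ^ d + c ^ (d ^ (n - 1) - 1)) :
    ∀ n : ℕ, 1 ≤ n →
      ((f.comp ·)^[n] X).eval 0 = (a n : ℚ) / (c : ℚ) ^ (d ^ (n - 1)) ∧
      IsCoprime (a n) (a (n + 1)) ∧ IsCoprime (a n) c ∧ IsCoprime (a (n + 1)) c := by
  have hc' : (c : ℚ) ≠ 0 := Int.cast_ne_zero.mpr hc
  -- recurrence in convenient form
  have hrec : ∀ m : ℕ, 1 ≤ m → a (m + 1) = a m ^ d + c ^ (d ^ m - 1) := by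
    intro m hm
    have := ha (m + 1) (by omega)
    simpa using this
  -- coprimality with c
  have hcop : ∀ n : ℕ, 1 ≤ n → IsCoprime (a n) c := by
    intro n hn
    induction n with
    | zero => omega
    | succ m ih =>
      rcases Nat.lt_or_ge 1 (m + 1) with h | h
      · have hm : 1 ≤ m := by omega
        have hdm : 2 ≤ d ^ m := by
          calc 2 ≤ d := hd
          _ = d ^ 1 := (pow_one d).symm
          _ ≤ d ^ m := Nat.pow_le_pow_right (by omega) hm
        rw [hrec m hm]
        have hck : c ^ (d ^ m - 1) = c * c ^ (d ^ m - 2) := by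
          rw [← pow_succ']
          congr 1
          omega
        rw [hck]
        have : IsCoprime (a m ^ d) c := (ih hm).pow_left
        have := this.add_mul_left_left (c ^ (d ^ m - 2))
        simpa [mul_comm] using this
      · have : m = 0 := by omega
        subst this
        rw [ha1]
        exact isCoprime_one_left
  -- coprimality of consecutive terms
  have hcons : ∀ n : ℕ, 1 ≤ n → IsCoprime (a n) (a (n + 1)) := by
    intro n hn
    rw [hrec n hn]
    have h1 : IsCoprime (a n) (c ^ (d ^ n - 1)) := (hcop n hn).pow_right
    have h2 := h1.add_mul_left_right (a n ^ (d - 1))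
    have hpow : a n ^ d = a n * a n ^ (d - 1) := by
      rw [← pow_succ']
      congr 1
      omega
    rw [hpow, add_comm]
    exact h2
  -- the evaluation formula
  have heval : ∀ n : ℕ, 1 ≤ n →
      ((f.comp ·)^[n] X).eval 0 = (a n : ℚ) / (c : ℚ) ^ (d ^ (n - 1)) := by
    intro n hn
    induction n with
    | zero => omega
    | succ m ih =>
      rcases Nat.lt_or_ge 1 (m + 1) with h | h
      · have hm : 1 ≤ m := by omega
        have ihm := ih hm
        rw [Function.iterate_succ_apply']
        rw [eval_comp, ihm, hf]
        have hdm : 1 ≤ d ^ m := Nat.one_le_pow _ _ (by omega)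
        have hmm : m - 1 + 1 = m := by omega
        simp only [eval_add, eval_pow, eval_X, eval_C, Nat.add_sub_cancel]
        rw [hrec m hm, div_pow, ← pow_mul]
        have hexp : d ^ (m - 1) * d = d ^ m := by
          rw [← pow_succ, hmm]
        rw [hexp]
        push_cast
        have hkey : (c : ℚ) ^ (d ^ m) = (c : ℚ) ^ (d ^ m - 1) * c := by
          rw [← pow_succ]
          congr 1
          omega
        rw [add_div, hkey]
        congr 1
        rw [div_mul_eq_div_div, div_self (pow_ne_zero _ hc')]
      · have : m = 0 := by omega
        subst this
        simp only [Function.iterate_one, eval_comp, hf]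
        simp [ha1, zero_pow (by omega : d ≠ 0)]
  intro n hn
  exact ⟨heval n hn, hcons n hn, hcop n hn, hcop (n + 1) (by omega)⟩
end
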